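/- Let a, b, N be positive integers such that both a and b are coprime to N. Then every element of vrm(|Γ(a,b,N)|) other than (N,0,0), (0,N,0), (0,0,N) is of the form (x, |ax|_N, |bx|_N) for some integer x with 1 ≤ x ≤ N/2. -/

import Mathlib

/-- The box `Π(A)` spanned by a (finite nonempty) set `A ⊆ ℝⁿ_{≥0}`:
all points with nonnegative coordinates bounded by the coordinatewise maxima of `A`. -/
def box {n : ℕ} (A : Set (Fin n → ℝ)) : Set (Fin n → ℝ) :=
  {x | ∀ i, 0 ≤ x i ∧ x i ≤ sSup ((fun p => p i) '' A)}

/-- The set of Voronoi relative minima of `S`: points `g ∈ S` such that the box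
`Π({g})` contains no point of `S \ {g}`. -/
def vrm {n : ℕ} (S : Set (Fin n → ℝ)) : Set (Fin n → ℝ) :=
  {g | g ∈ S ∧ ∀ p ∈ S, p ≠ g → p ∉ box {g}}

/-- A nonempty finite subset `F ⊆ vrm S` is minimal if the box `Π(F)` contains
no point of `vrm S \ F`. -/
def IsMinimal {n : ℕ} (S F : Set (Fin n → ℝ)) : Prop :=
  F.Nonempty ∧ F.Finite ∧ F ⊆ vrm S ∧ ∀ p ∈ vrm S, p ∉ F → p ∉ box F

/-- `p` is a point on the `j`-th coordinate axis, different from the origin. -/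
def OnAxis (j : Fin 3) (p : Fin 3 → ℝ) : Prop :=
  p ≠ 0 ∧ ∀ k, k ≠ j → p k = 0

/-- `S ⊆ ℝ³` is axial if it contains a point on each of the three coordinate axes. -/
def Axial (S : Set (Fin 3 → ℝ)) : Prop :=
  ∀ j : Fin 3, ∃ p ∈ S, ∀ k, k ≠ j → p k = 0

/-- A finite axial set `S ⊆ ℝ³_{≥0}` is in general position if (i) each coordinate
plane contains exactly two points of `S`, neither at the origin, lying on the two
coordinate axes contained in that plane, and (ii) every other plane parallel to a
coordinate plane contains at most one point of `S`. -/
def GeneralPosition (S : Set (Fin 3 → ℝ)) : Prop :=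
  (∀ i : Fin 3, ∃ p q : Fin 3 → ℝ, p ≠ q ∧ {r | r ∈ S ∧ r i = 0} = {p, q} ∧
    ∃ j k : Fin 3, j ≠ i ∧ k ≠ i ∧ j ≠ k ∧ OnAxis j p ∧ OnAxis k q) ∧
  (∀ i : Fin 3, ∀ c : ℝ, c ≠ 0 → {r | r ∈ S ∧ r i = c}.Subsingleton)

/-- The rank-1 lattice `Γ(a,b,N) = {m₁·(1,a,b) + m₂·(0,N,0) + m₃·(0,0,N)} ⊆ ℝ³`. -/
def Gamma (a b N : ℤ) : Set (Fin 3 → ℝ) :=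
  {p | ∃ m₁ m₂ m₃ : ℤ,
    p = ![(m₁ : ℝ), (m₁ : ℝ) * a + (m₂ : ℝ) * N, (m₁ : ℝ) * b + (m₃ : ℝ) * N]}

/-- `|Γ| = {(|x₁|,…,|xₙ|) : x ∈ Γ} \ {0}`. -/
def absSet {n : ℕ} (L : Set (Fin n → ℝ)) : Set (Fin n → ℝ) :=
  {q | (∃ p ∈ L, ∀ i, q i = |p i|) ∧ q ≠ 0}

/-- `|x|_N = min(x mod N, (−x) mod N)`, the distance from `x` to the nearest
multiple of `N`. -/
def distN (N x : ℤ) : ℤ := min (x % N) ((-x) % N)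

/-!
A point `p = (|m₁|, |m₁a + m₂N|, |m₁b + m₃N|)` of `|Γ|` dominates the point
`(x, |ax|_N, |bx|_N)` with `x = |m₁|_N`, which also lies in `|Γ|`; since `p` is a Voronoi
relative minimum, the two are equal. This breaks down only when `N ∣ m₁`, but then every
coordinate of `p` is a multiple of `N`, so `p` dominates one of the axis points `N eᵢ`.
-/

section distN

variable {N x y : ℤ}

lemma distN_congr (h : x ≡ y [ZMOD N]) : distN N x = distN N y := by
  rw [distN, distN, show x % N = y % N from h, show -x % N = -y % N from h.neg]

lemma distN_neg : distN N (-x) = distN N x := by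
  rw [distN, distN, neg_neg, min_comm]

lemma distN_le_abs (hN : 0 < N) : distN N x ≤ |x| := by
  have h : ∀ z : ℤ, 0 ≤ z → z % N ≤ z := fun z hz => by
    have := Int.ediv_nonneg hz hN.le
    rw [Int.emod_def]
    nlinarith
  rcases abs_cases x with ⟨hx, _⟩ | ⟨hx, _⟩ <;> rw [hx]
  · exact (min_le_left _ _).trans (h x (by omega))
  · exact (min_le_right _ _).trans (h (-x) (by omega))

lemma distN_le_abs_add_mul (hN : 0 < N) (k : ℤ) : distN N x ≤ |x + k * N| := by
  rw [distN_congr (show x ≡ x + k * N [ZMOD N] by simp [Int.ModEq])]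
  exact distN_le_abs hN

lemma distN_eq_ite (hN : 0 < N) :
    distN N x = if N ∣ x then 0 else min (x % N) (N - x % N) := by
  rw [distN, Int.neg_emod, Int.natCast_natAbs, abs_of_pos hN]
  split_ifs with h
  · rw [Int.emod_eq_zero_of_dvd h, min_self]
  · rfl

lemma distN_pos (hN : 0 < N) (hx : ¬N ∣ x) : 0 < distN N x := by
  have : x % N ≠ 0 := fun h => hx (Int.dvd_of_emod_eq_zero h)
  have := Int.emod_nonneg x hN.ne'
  have := Int.emod_lt_of_pos x hN
  rw [distN_eq_ite hN, if_neg hx]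
  omega

lemma two_mul_distN_le (hN : 0 < N) : 2 * distN N x ≤ N := by
  rw [distN_eq_ite hN]
  split_ifs <;> omega

lemma exists_abs_add_mul_eq_distN (hN : 0 < N) : ∃ k : ℤ, |x + k * N| = distN N x := by
  rcases min_choice (x % N) (-x % N) with h | h
  · refine ⟨-(x / N), ?_⟩
    rw [distN, h, ← abs_of_nonneg (Int.emod_nonneg x hN.ne'), Int.emod_def]
    ring_nf
  · refine ⟨-x / N, ?_⟩
    rw [distN, h, ← abs_of_nonneg (Int.emod_nonneg (-x) hN.ne'), Int.emod_def, ← abs_neg]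
    ring_nf

lemma distN_mul_distN (c x : ℤ) : distN N (c * distN N x) = distN N (c * x) := by
  rcases min_choice (x % N) (-x % N) with h | h <;> rw [show distN N x = _ from h]
  · exact distN_congr ((Int.mod_modEq x N).mul_left c)
  · rw [distN_congr ((Int.mod_modEq (-x) N).mul_left c), mul_neg, distN_neg]

lemma distN_mul_distN_le_abs (hN : 0 < N) (c x k : ℤ) :
    distN N (c * distN N x) ≤ |x * c + k * N| := by
  rw [distN_mul_distN, mul_comm]
  exact distN_le_abs_add_mul hN k

end distN

lemma mem_box_singleton {n : ℕ} {g x : Fin n → ℝ} : x ∈ box {g} ↔ 0 ≤ x ∧ x ≤ g := by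
  simp [box, Pi.le_def, forall_and]

lemma eq_of_mem_vrm_of_le {n : ℕ} {S : Set (Fin n → ℝ)} {g q : Fin n → ℝ} (hg : g ∈ vrm S)
    (hq : q ∈ S) (hq₀ : 0 ≤ q) (hqg : q ≤ g) : q = g := by
  by_contra hne
  exact hg.2 q hq hne (mem_box_singleton.2 ⟨hq₀, hqg⟩)

lemma nonneg_of_mem_absSet {n : ℕ} {L : Set (Fin n → ℝ)} {q : Fin n → ℝ} (hq : q ∈ absSet L) :
    0 ≤ q := by
  obtain ⟨⟨p, -, hp⟩, -⟩ := hq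
  exact fun i => (hp i).symm ▸ abs_nonneg (p i)

lemma vecCons_le_vecCons_iff {x y z x' y' z' : ℝ} :
    ![x, y, z] ≤ ![x', y', z'] ↔ x ≤ x' ∧ y ≤ y' ∧ z ≤ z' := by
  simp [Pi.le_def, Fin.forall_fin_succ]

lemma mem_absSet_Gamma_iff {a b N : ℤ} {q : Fin 3 → ℝ} :
    q ∈ absSet (Gamma a b N) ↔ q ≠ 0 ∧ ∃ m₁ m₂ m₃ : ℤ,
      q = ![((|m₁| : ℤ) : ℝ), ((|m₁ * a + m₂ * N| : ℤ) : ℝ), ((|m₁ * b + m₃ * N| : ℤ) : ℝ)] := by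
  rw [absSet, Set.mem_ofPred_eq, and_comm]
  refine and_congr_right fun _ => ⟨?_, ?_⟩
  · rintro ⟨-, ⟨m₁, m₂, m₃, rfl⟩, hq⟩
    refine ⟨m₁, m₂, m₃, funext fun i => ?_⟩
    fin_cases i <;> simp [hq]
  · rintro ⟨m₁, m₂, m₃, rfl⟩
    refine ⟨_, ⟨m₁, m₂, m₃, rfl⟩, fun i => ?_⟩
    fin_cases i <;> simp

lemma axes_mem_absSet_Gamma {a b N : ℤ} (hN : 0 < N) :
    ![(N : ℝ), 0, 0] ∈ absSet (Gamma a b N) ∧ ![0, (N : ℝ), 0] ∈ absSet (Gamma a b N) ∧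
      ![0, 0, (N : ℝ)] ∈ absSet (Gamma a b N) := by
  have hN' : (N : ℝ) ≠ 0 := by exact_mod_cast hN.ne'
  refine ⟨mem_absSet_Gamma_iff.2 ⟨fun h => hN' (by simpa using congrFun h 0), N, -a, -b, ?_⟩,
    mem_absSet_Gamma_iff.2 ⟨fun h => hN' (by simpa using congrFun h 1), 0, 1, 0, ?_⟩,
    mem_absSet_Gamma_iff.2 ⟨fun h => hN' (by simpa using congrFun h 2), 0, 0, 1, ?_⟩⟩ <;>
  ext i <;> fin_cases i <;> simp [abs_of_pos hN, mul_comm]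

lemma reduced_mem_absSet_Gamma {a b N x : ℤ} (hN : 0 < N) (hx : 0 < x) :
    ![(x : ℝ), (distN N (a * x) : ℝ), (distN N (b * x) : ℝ)] ∈ absSet (Gamma a b N) := by
  obtain ⟨k₂, hk₂⟩ := exists_abs_add_mul_eq_distN (x := a * x) hN
  obtain ⟨k₃, hk₃⟩ := exists_abs_add_mul_eq_distN (x := b * x) hN
  refine mem_absSet_Gamma_iff.2 ⟨fun h => hx.ne' (by simpa using congrFun h 0), x, k₂, k₃, ?_⟩
  rw [abs_of_pos hx, mul_comm x a, mul_comm x b, hk₂, hk₃]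

lemma axis_le_of_dvd {N x y z : ℤ} (hx : N ∣ x) (hy : N ∣ y) (hz : N ∣ z)
    (h₀ : ![((|x| : ℤ) : ℝ), ((|y| : ℤ) : ℝ), ((|z| : ℤ) : ℝ)] ≠ 0) :
    ![(N : ℝ), 0, 0] ≤ ![((|x| : ℤ) : ℝ), ((|y| : ℤ) : ℝ), ((|z| : ℤ) : ℝ)] ∨
      ![0, (N : ℝ), 0] ≤ ![((|x| : ℤ) : ℝ), ((|y| : ℤ) : ℝ), ((|z| : ℤ) : ℝ)] ∨
      ![0, 0, (N : ℝ)] ≤ ![((|x| : ℤ) : ℝ), ((|y| : ℤ) : ℝ), ((|z| : ℤ) : ℝ)] := by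
  have hne : x ≠ 0 ∨ y ≠ 0 ∨ z ≠ 0 := by
    contrapose! h₀
    simp [h₀]
  have le_abs : ∀ w : ℤ, N ∣ w → w ≠ 0 → (N : ℝ) ≤ ((|w| : ℤ) : ℝ) := fun w hw hw₀ => by
    exact_mod_cast Int.le_of_dvd (abs_pos.2 hw₀) ((dvd_abs _ _).2 hw)
  simp only [vecCons_le_vecCons_iff, Int.cast_nonneg, abs_nonneg, and_true, true_and]
  rcases hne with h | h | h
  · exact .inl (le_abs x hx h)
  · exact .inr (.inl (le_abs y hy h))
  · exact .inr (.inr (le_abs z hz h))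

theorem vrm_mem_form_general
    (a b N : ℤ) (hN : 1 ≤ N)
    (p : Fin 3 → ℝ) (hp : p ∈ vrm (absSet (Gamma a b N)))
    (hp1 : p ≠ ![(N : ℝ), 0, 0]) (hp2 : p ≠ ![0, (N : ℝ), 0])
    (hp3 : p ≠ ![0, 0, (N : ℝ)]) :
    ∃ x : ℤ, 1 ≤ x ∧ 2 * x ≤ N ∧
      p = ![(x : ℝ), (distN N (a * x) : ℝ), (distN N (b * x) : ℝ)] := by
  have hN₀ : 0 < N := hN
  obtain ⟨hp₀, m₁, m₂, m₃, rfl⟩ := mem_absSet_Gamma_iff.1 hp.1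
  have dominated : ∀ q ∈ absSet (Gamma a b N), q ≤ _ → q = _ := fun q hq =>
    eq_of_mem_vrm_of_le hp hq (nonneg_of_mem_absSet hq)
  by_cases hdiv : N ∣ m₁
  · obtain ⟨hN₁, hN₂, hN₃⟩ := axes_mem_absSet_Gamma (a := a) (b := b) hN₀
    have hy : N ∣ m₁ * a + m₂ * N := dvd_add (hdiv.mul_right a) (dvd_mul_left N m₂)
    have hz : N ∣ m₁ * b + m₃ * N := dvd_add (hdiv.mul_right b) (dvd_mul_left N m₃)
    rcases axis_le_of_dvd hdiv hy hz hp₀ with h | h | h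
    · exact absurd (dominated _ hN₁ h).symm hp1
    · exact absurd (dominated _ hN₂ h).symm hp2
    · exact absurd (dominated _ hN₃ h).symm hp3
  · have hx := distN_pos hN₀ hdiv
    refine ⟨distN N m₁, hx, two_mul_distN_le hN₀,
      (dominated _ (reduced_mem_absSet_Gamma hN₀ hx) (vecCons_le_vecCons_iff.2 ⟨?_, ?_, ?_⟩)).symm⟩
    · exact_mod_cast distN_le_abs hN₀
    · exact_mod_cast distN_mul_distN_le_abs hN₀ a m₁ m₂
    · exact_mod_cast distN_mul_distN_le_abs hN₀ b m₁ m₃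

/-- Let `a, b, N` be positive integers such that both `a` and `b` are coprime to
`N`. Then every element of `vrm(|Γ(a,b,N)|)` other than `(N,0,0)`, `(0,N,0)`,
`(0,0,N)` is of the form `(x, |ax|_N, |bx|_N)` for some integer `1 ≤ x ≤ N/2`. -/
theorem vrm_mem_form
    (a b N : ℤ) (ha : 1 ≤ a) (hb : 1 ≤ b) (hN : 1 ≤ N)
    (haN : Int.gcd a N = 1) (hbN : Int.gcd b N = 1)
    (p : Fin 3 → ℝ) (hp : p ∈ vrm (absSet (Gamma a b N)))
    (hp1 : p ≠ ![(N : ℝ), 0, 0]) (hp2 : p ≠ ![0, (N : ℝ), 0])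
    (hp3 : p ≠ ![0, 0, (N : ℝ)]) :
    ∃ x : ℤ, 1 ≤ x ∧ 2 * x ≤ N ∧
      p = ![(x : ℝ), (distN N (a * x) : ℝ), (distN N (b * x) : ℝ)] :=
  vrm_mem_form_general a b N hN p hp hp1 hp2 hp3
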